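/- In the partial suppression setup, R' has no covered item of I: for every z ∈ I, s(I, R') < s({z}, R'). In other words, the partially suppressed record chunk R' is not subject to a cover problem for the itemset I. -/
import Mathlib


variable {α : Type*} [DecidableEq α]

/-- Support of an itemset `I` in a record chunk `R`: the number of records
of `R`, counted with multiplicity, that are supersets of `I`. -/
def supp (I : Finset α) (R : Multiset (Finset α)) : ℕ :=
  (R.filter fun r => I ⊆ r).card

lemma supp_add (I : Finset α) (A B : Multiset (Finset α)) :
    supp I (A + B) = supp I A + supp I B := by
  simp [supp, Multiset.filter_add]

theorem partial_suppression_no_cover_problem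
    (I : Finset α) (hI : 2 ≤ I.card)
    (c : ℕ) (hc : c = (I.card + 1) / 2)
    (P : Fin c → Finset α)
    (hPdisj : ∀ i j : Fin c, i ≠ j → Disjoint (P i) (P j))
    (hPne : ∀ i : Fin c, (P i).Nonempty)
    (hPcard : ∀ i : Fin c, (P i).card ≤ 2)
    (hPunion : Finset.univ.biUnion P = I)
    (L₁ L₂ : Finset α)
    (hLunion : L₁ ∪ L₂ = I) (hLdisj : L₁ ∩ L₂ = ∅)
    (hsplit : ∀ i : Fin c, (P i).card = 2 →
      (P i ∩ L₁).card = 1 ∧ (P i ∩ L₂).card = 1)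
    (R : Multiset (Finset α))
    (hR : c • ({I} : Multiset (Finset α)) ≤ R)
    (R' : Multiset (Finset α))
    (hR' : R' = (R - c • ({I} : Multiset (Finset α)))
      + (Finset.univ.val.map fun i : Fin c => I \ P i)
      + {L₁, L₂})
    :
    ∀ z ∈ I, supp I R' < supp {z} R' := by
  intro z hz
  have hPsub : ∀ i, P i ⊆ I := by
    intro i x hx
    rw [← hPunion]
    exact Finset.mem_biUnion.mpr ⟨i, Finset.mem_univ i, hx⟩
  have hc1 : 1 ≤ c := by omega
  -- sum of cards of parts equals card of I
  have hcard_sum : ∑ i : Fin c, (P i).card = I.card := by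
    rw [← hPunion, Finset.card_biUnion]
    intro i _ j _ hij; exact hPdisj i j hij
  have hclt : c < I.card := by omega
  have hex2 : ∃ i, (P i).card = 2 := by
    by_contra h
    push_neg at h
    have h1 : ∀ i, (P i).card ≤ 1 := fun i => by
      have := hPcard i; have := h i; omega
    have h2 : ∑ i : Fin c, (P i).card ≤ ∑ _i : Fin c, 1 :=
      Finset.sum_le_sum fun i _ => h1 i
    simp at h2
    omega
  obtain ⟨i₂, hi₂⟩ := hex2
  have hL1ne : L₁.Nonempty := by
    have h1 := (hsplit i₂ hi₂).1
    have h2 : (P i₂ ∩ L₁).Nonempty := Finset.card_pos.mp (by omega)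
    exact h2.mono Finset.inter_subset_right
  have hL2ne : L₂.Nonempty := by
    have h1 := (hsplit i₂ hi₂).2
    have h2 : (P i₂ ∩ L₂).Nonempty := Finset.card_pos.mp (by omega)
    exact h2.mono Finset.inter_subset_right
  have hIL1 : ¬ I ⊆ L₁ := by
    intro h
    obtain ⟨w, hw⟩ := hL2ne
    have hwI : w ∈ I := hLunion ▸ Finset.mem_union_right _ hw
    have : w ∈ L₁ ∩ L₂ := Finset.mem_inter.mpr ⟨h hwI, hw⟩
    simp [hLdisj] at this
  have hIL2 : ¬ I ⊆ L₂ := by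
    intro h
    obtain ⟨w, hw⟩ := hL1ne
    have hwI : w ∈ I := hLunion ▸ Finset.mem_union_left _ hw
    have : w ∈ L₁ ∩ L₂ := Finset.mem_inter.mpr ⟨hw, h hwI⟩
    simp [hLdisj] at this
  set A := R - c • ({I} : Multiset (Finset α)) with hA
  set M := (Finset.univ.val.map fun i : Fin c => I \ P i) with hM
  subst hR'
  rw [supp_add, supp_add, supp_add, supp_add]
  -- supp I M = 0
  have hsIM : supp I M = 0 := by
    rw [supp, Multiset.card_eq_zero, Multiset.filter_eq_nil]
    intro r hr
    rw [hM, Multiset.mem_map] at hr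
    obtain ⟨i, _, rfl⟩ := hr
    intro hsub
    obtain ⟨x, hx⟩ := hPne i
    have := hsub (hPsub i hx)
    simp at this
    exact this.2 hx
  -- supp I {L₁, L₂} = 0
  have hsIL : supp I ({L₁, L₂} : Multiset (Finset α)) = 0 := by
    rw [supp, Multiset.card_eq_zero, Multiset.filter_eq_nil]
    intro r hr
    rcases Multiset.mem_cons.mp hr with h | h
    · subst h; exact hIL1
    · rw [Multiset.mem_singleton] at h; subst h; exact hIL2
  -- supp {z} A ≥ supp I A
  have hA1 : supp I A ≤ supp {z} A := by
    apply Multiset.card_le_card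
    apply Multiset.monotone_filter_right
    intro r hr
    simpa using hr hz
  -- supp {z} M ≥ c - 1
  have hM1 : c - 1 ≤ supp {z} M := by
    rw [supp, hM]
    have heq : Multiset.card (Multiset.filter (fun a : Finset α => {z} ⊆ a)
        (Finset.univ.val.map fun i : Fin c => I \ P i))
        = (Finset.univ.filter fun i : Fin c => z ∉ P i).card := by
      rw [Multiset.filter_map, Multiset.card_map]
      show Multiset.card _ = Multiset.card ((Finset.univ.filter fun i : Fin c => z ∉ P i).val)
      rw [Finset.filter_val]
      congr 1
      apply Multiset.filter_congr
      intro i _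
      simp [Function.comp, Finset.singleton_subset_iff, Finset.mem_sdiff, hz]
    rw [heq]
    have hle1 : (Finset.univ.filter fun i : Fin c => z ∈ P i).card ≤ 1 := by
      apply Finset.card_le_one.mpr
      intro i hi j hj
      simp only [Finset.mem_filter] at hi hj
      by_contra hij
      simpa using (hPdisj i j hij).le_bot (Finset.mem_inter.mpr ⟨hi.2, hj.2⟩)
    have := Finset.card_filter_add_card_filter_not
      (s := (Finset.univ : Finset (Fin c))) (p := fun i => z ∈ P i)
    simp only [Finset.card_univ, Fintype.card_fin] at this
    omega
  -- supp {z} {L₁, L₂} ≥ 1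
  have hL1 : 1 ≤ supp {z} ({L₁, L₂} : Multiset (Finset α)) := by
    have hzL : z ∈ L₁ ∨ z ∈ L₂ := by
      rw [← Finset.mem_union, hLunion]; exact hz
    rw [supp]
    rcases hzL with h | h
    · exact Multiset.card_pos_iff_exists_mem.mpr
        ⟨L₁, Multiset.mem_filter.mpr ⟨by simp, by simpa using h⟩⟩
    · exact Multiset.card_pos_iff_exists_mem.mpr
        ⟨L₂, Multiset.mem_filter.mpr ⟨by simp, by simpa using h⟩⟩
  omega
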